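/- arXiv:2111.01635 — 2 statements merged into one kernel-verified Lean document; each statement's English description precedes it below -/
import Mathlib

section
/- Suppose the target training samples D_t = {Z_j^t}_{j=1}^m are i.i.d. from P_Z^t and the nonnegative loss ℓ(w,Z) is σ-sub-Gaussian under the distribution P_Z^t ⊗ P_W. Then for any learning algorithm P_{W|D_s,D_t}, the expected transfer generalization error satisfies |gen(P_{W|D_s,D_t},P_{D_s},P_{D_t})| ≤ sqrt( (2σ²/m) · I(W; D_t | D_s) ). -/
/-!
The generalization gap splits over the target samples:
`gen = (1/m) ∑ j, (E_{P_W ⊗ P_Z} ℓ - E_{P_{W,Z_j}} ℓ)`. By the Donsker–Varadhan formula,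
sub-Gaussianity of `ℓ` under `P_W ⊗ P_Z` bounds the `j`-th term by `√(2σ² I(W; Z_j))`.
Since the `Z_j` are independent and independent of `D_s`, `∑ j, I(W; Z_j) ≤ I(W; D_t | D_s)`:
the difference is the relative entropy of the law of `(D_s, D_t, W)` with respect to the law
in which, given `D_s`, `W` is drawn as before and the `Z_j` are then drawn independently from
their conditional laws given `W`. Cauchy–Schwarz combines the `m` terms.
-/

open scoped BigOperators
open Finset

noncomputable section

namespace TransferGibbs

def KL {α : Type*} [Fintype α] (p q : α → ℝ) : ℝ :=
  ∑ x, p x * Real.log (p x / q x)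

def IsPMF {α : Type*} [Fintype α] (p : α → ℝ) : Prop := (∀ x, 0 ≤ p x) ∧ ∑ x, p x = 1

def empRisk {W Z : Type*} [Fintype Z] (ℓ : W → Z → ℝ) {k : ℕ} (d : Fin k → Z) (w : W) : ℝ :=
  (∑ j, ℓ w (d j)) / k

def popRisk {W Z : Type*} [Fintype Z] (ℓ : W → Z → ℝ) {m : ℕ}
    (pT : (Fin m → Z) → ℝ) (w : W) : ℝ :=
  ∑ dt, pT dt * empRisk ℓ dt w

/-- i.i.d. law of the target data set: product of `m` copies of `pZ`. -/
def iid {Z : Type*} [Fintype Z] (m : ℕ) (pZ : Z → ℝ) (dt : Fin m → Z) : ℝ :=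
  ∏ j, pZ (dt j)

def gen {W Z : Type*} [Fintype W] [Fintype Z] (ℓ : W → Z → ℝ) {n m : ℕ}
    (pS : (Fin n → Z) → ℝ) (pT : (Fin m → Z) → ℝ)
    (P : (Fin n → Z) → (Fin m → Z) → W → ℝ) : ℝ :=
  ∑ ds, ∑ dt, ∑ w, pS ds * pT dt * P ds dt w * (popRisk ℓ pT w - empRisk ℓ dt w)

/-- Conditional mutual information I(W; D_t | D_s), for independent D_s ⟂ D_t. -/
def condMI {W Z : Type*} [Fintype W] [Fintype Z] {n m : ℕ}
    (pS : (Fin n → Z) → ℝ) (pT : (Fin m → Z) → ℝ)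
    (P : (Fin n → Z) → (Fin m → Z) → W → ℝ) : ℝ :=
  ∑ ds, pS ds *
    KL (fun p : W × (Fin m → Z) => pT p.2 * P ds p.2 p.1)
       (fun p : W × (Fin m → Z) => (∑ dt, pT dt * P ds dt p.1) * pT p.2)

/-- Marginal distribution of the output hypothesis `W`. -/
def margW {W Z : Type*} [Fintype W] [Fintype Z] {n m : ℕ}
    (pS : (Fin n → Z) → ℝ) (pT : (Fin m → Z) → ℝ)
    (P : (Fin n → Z) → (Fin m → Z) → W → ℝ) (w : W) : ℝ :=
  ∑ ds, ∑ dt, pS ds * pT dt * P ds dt w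

/-- `ℓ(w, Z)` is `σ`-sub-Gaussian under `pZ ⊗ pW`:
`log E[e^{λ(ℓ(W,Z) − E ℓ(W,Z))}] ≤ σ²λ²/2` for all real `λ`. -/
def SubGaussianLoss {W Z : Type*} [Fintype W] [Fintype Z]
    (ℓ : W → Z → ℝ) (pW : W → ℝ) (pZ : Z → ℝ) (σ : ℝ) : Prop :=
  ∀ lam : ℝ,
    Real.log (∑ w, ∑ z, pW w * pZ z *
        Real.exp (lam * (ℓ w z - ∑ w', ∑ z', pW w' * pZ z' * ℓ w' z'))) ≤
      σ ^ 2 * lam ^ 2 / 2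

section Information

variable {α : Type*} [Fintype α]

lemma sub_le_mul_log_div {a b : ℝ} (ha : 0 ≤ a) (hb : 0 ≤ b) (hab : b = 0 → a = 0) :
    a - b ≤ a * Real.log (a / b) := by
  rcases ha.eq_or_lt with rfl | ha
  · simpa using hb
  have hb : 0 < b := hb.lt_of_ne fun h => ha.ne' (hab h.symm)
  calc a - b = a * (1 - (a / b)⁻¹) := by field_simp
    _ ≤ a * Real.log (a / b) := by gcongr; exact Real.one_sub_inv_le_log_of_pos (by positivity)

lemma sum_sub_sum_le_KL {p q : α → ℝ} (hp : ∀ x, 0 ≤ p x) (hq : ∀ x, 0 ≤ q x)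
    (hpq : ∀ x, q x = 0 → p x = 0) : ∑ x, p x - ∑ x, q x ≤ KL p q := by
  rw [KL, ← sum_sub_distrib]
  exact sum_le_sum fun x _ => sub_le_mul_log_div (hp x) (hq x) (hpq x)

lemma KL_nonneg {p q : α → ℝ} (hp : IsPMF p) (hq : ∀ x, 0 ≤ q x) (hq1 : ∑ x, q x ≤ 1)
    (hpq : ∀ x, q x = 0 → p x = 0) : 0 ≤ KL p q := by
  linarith [sum_sub_sum_le_KL hp.1 hq hpq, hp.2]

/-- Donsker–Varadhan, finite form. -/
theorem sum_mul_le_KL_add_log_sum_mul_exp {p q : α → ℝ} (g : α → ℝ) (hp : IsPMF p)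
    (hq : ∀ x, 0 ≤ q x) (hpq : ∀ x, q x = 0 → p x = 0) :
    ∑ x, p x * g x ≤ KL p q + Real.log (∑ x, q x * Real.exp (g x)) := by
  set c := ∑ x, q x * Real.exp (g x)
  have hpos : ∀ x, p x ≠ 0 → 0 < q x := fun x hx => (hq x).lt_of_ne' (mt (hpq x) hx)
  obtain ⟨x₀, hx₀⟩ : ∃ x, p x ≠ 0 := by
    by_contra! h
    simpa [h] using hp.2
  have hc : 0 < c := lt_of_lt_of_le (mul_pos (hpos x₀ hx₀) (Real.exp_pos _))
    (single_le_sum (fun x _ => mul_nonneg (hq x) (Real.exp_pos _).le) (mem_univ x₀))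
  -- Gibbs' inequality against the tilted law `q e^g / c`
  set r : α → ℝ := fun x => q x * Real.exp (g x) / c
  have hr : ∀ x, 0 ≤ r x := fun x => div_nonneg (mul_nonneg (hq x) (Real.exp_pos _).le) hc.le
  have hr1 : ∑ x, r x = 1 := by rw [← sum_div, div_self hc.ne']
  have hpr : ∀ x, r x = 0 → p x = 0 := fun x h => hpq x (by
    simpa [r, hc.ne', Real.exp_ne_zero] using h)
  have hKL : KL p r = KL p q - ∑ x, p x * g x + Real.log c := by
    have hlogc : Real.log c = ∑ x, p x * Real.log c := by rw [← sum_mul, hp.2, one_mul]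
    rw [hlogc, KL, KL, ← sum_sub_distrib, ← sum_add_distrib]
    refine Finset.sum_congr rfl fun x _ => ?_
    by_cases hx : p x = 0
    · simp [hx]
    have hpx : 0 < p x := (hp.1 x).lt_of_ne' hx
    have hqx := hpos x hx
    rw [show p x / r x = p x / q x / Real.exp (g x) * c by simp only [r]; field_simp,
      Real.log_mul (by positivity) hc.ne', Real.log_div (by positivity) (Real.exp_ne_zero _),
      Real.log_exp]
    ring
  linarith [KL_nonneg hp hr hr1.le hpr]

lemma sq_le_two_mul_mul_of_forall_mul_le {d c s : ℝ} (hs : 0 ≤ s)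
    (h : ∀ t, t * d ≤ c + s * t ^ 2 / 2) : d ^ 2 ≤ 2 * s * c := by
  rcases hs.eq_or_lt with rfl | hs
  · obtain rfl : d = 0 := by
      by_contra hd
      have := h ((c + 1) / d)
      rw [div_mul_cancel₀ _ hd] at this
      linarith
    simp
  · have h1 : d / s * d - s * (d / s) ^ 2 / 2 = d ^ 2 / (2 * s) := by field_simp; ring
    have h2 : d ^ 2 / (2 * s) ≤ c := by linarith [h (d / s)]
    rw [div_le_iff₀ (by positivity)] at h2
    linarith

theorem sq_sum_sub_sum_le_two_mul_KL {p q : α → ℝ} (f : α → ℝ) {σ : ℝ} (hp : IsPMF p)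
    (hq : ∀ x, 0 ≤ q x) (hpq : ∀ x, q x = 0 → p x = 0)
    (hf : ∀ t : ℝ, Real.log (∑ x, q x * Real.exp (t * (f x - ∑ y, q y * f y))) ≤
      σ ^ 2 * t ^ 2 / 2) :
    (∑ x, p x * f x - ∑ x, q x * f x) ^ 2 ≤ 2 * σ ^ 2 * KL p q := by
  refine sq_le_two_mul_mul_of_forall_mul_le (sq_nonneg σ) fun t => ?_
  set μ := ∑ y, q y * f y
  have hmean : ∑ x, p x * (t * (f x - μ)) = t * (∑ x, p x * f x - μ) := by
    calc ∑ x, p x * (t * (f x - μ)) = ∑ x, (t * (p x * f x) - t * μ * p x) :=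
          sum_congr rfl fun x _ => by ring
      _ = t * (∑ x, p x * f x - μ) := by
          rw [sum_sub_distrib, ← mul_sum, ← mul_sum, hp.2]; ring
  linarith [sum_mul_le_KL_add_log_sum_mul_exp (fun x => t * (f x - μ)) hp hq hpq, hf t]

lemma sum_sqrt_div_card_le_sqrt {ι : Type*} (s : Finset ι) {x : ι → ℝ}
    (hx : ∀ i ∈ s, 0 ≤ x i) : (∑ i ∈ s, √(x i)) / #s ≤ √((∑ i ∈ s, x i) / #s) := by
  refine Real.le_sqrt_of_sq_le ?_
  have hcs : (∑ i ∈ s, √(x i)) ^ 2 ≤ #s * ∑ i ∈ s, x i := by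
    calc (∑ i ∈ s, √(x i)) ^ 2 ≤ #s * ∑ i ∈ s, √(x i) ^ 2 := sq_sum_le_card_mul_sum_sq
      _ = #s * ∑ i ∈ s, x i := by
          rw [sum_congr rfl fun i hi => Real.sq_sqrt (hx i hi)]
  rcases eq_or_ne (#s : ℝ) 0 with h | h
  · simp [h]
  rw [div_pow, div_le_div_iff₀ (by positivity) (by positivity)]
  nlinarith [sq_nonneg (#s : ℝ)]

lemma le_sum_sum {β γ : Type*} [Fintype β] [Fintype γ] {f : β → γ → ℝ}
    (hf : ∀ b c, 0 ≤ f b c) (b : β) (c : γ) : f b c ≤ ∑ b, ∑ c, f b c :=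
  (single_le_sum (fun c _ => hf b c) (mem_univ c)).trans
    (single_le_sum (f := fun b => ∑ c, f b c) (fun b _ => sum_nonneg fun c _ => hf b c)
      (mem_univ b))

end Information

section MutualInfo

variable {A B : Type*} [Fintype A] [Fintype B]

def mutualInfo (π : A → B → ℝ) : ℝ :=
  KL (fun x : A × B => π x.1 x.2) (fun x => (∑ b, π x.1 b) * ∑ a, π a x.2)

variable {π : A → B → ℝ}

lemma eq_zero_of_sum_mul_sum_eq_zero (hπ : ∀ a b, 0 ≤ π a b) {a : A} {b : B}
    (h : (∑ b', π a b') * (∑ a', π a' b) = 0) : π a b = 0 := by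
  rcases mul_eq_zero.mp h with h | h
  · exact (sum_eq_zero_iff_of_nonneg fun b' _ => hπ a b').mp h b (mem_univ b)
  · exact (sum_eq_zero_iff_of_nonneg fun a' _ => hπ a' b).mp h a (mem_univ a)

lemma mutualInfo_nonneg (hπ : IsPMF (Function.uncurry π)) : 0 ≤ mutualInfo π := by
  have hπ0 : ∀ a b, 0 ≤ π a b := fun a b => hπ.1 (a, b)
  refine KL_nonneg hπ (fun x => mul_nonneg (sum_nonneg fun b _ => hπ0 _ b)
    (sum_nonneg fun a _ => hπ0 a _)) (le_of_eq ?_) fun x => eq_zero_of_sum_mul_sum_eq_zero hπ0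
  have h1 : ∑ a, ∑ b, π a b = 1 := by simpa [Fintype.sum_prod_type] using hπ.2
  have h2 : ∑ b, ∑ a, π a b = 1 := by rw [Finset.sum_comm]; exact h1
  simp only [Fintype.sum_prod_type, ← mul_sum, h2, mul_one, h1]

/-- The decoupling estimate of Xu and Raginsky. -/
theorem sq_sub_le_two_mul_mutualInfo (hπ : IsPMF (Function.uncurry π)) (f : A → B → ℝ) {σ : ℝ}
    (hf : SubGaussianLoss f (fun a => ∑ b, π a b) (fun b => ∑ a, π a b) σ) :
    (∑ a, ∑ b, π a b * f a b - ∑ a, ∑ b, (∑ b', π a b') * (∑ a', π a' b) * f a b) ^ 2 ≤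
      2 * σ ^ 2 * mutualInfo π := by
  have hπ0 : ∀ a b, 0 ≤ π a b := fun a b => hπ.1 (a, b)
  have := sq_sum_sub_sum_le_two_mul_KL (p := fun x : A × B => π x.1 x.2)
    (q := fun x => (∑ b, π x.1 b) * ∑ a, π a x.2) (σ := σ)
    (fun x : A × B => f x.1 x.2) hπ
    (fun x => mul_nonneg (sum_nonneg fun b _ => hπ0 _ b) (sum_nonneg fun a _ => hπ0 a _))
    (fun x => eq_zero_of_sum_mul_sum_eq_zero hπ0)
    (fun t => by simpa only [Fintype.sum_prod_type] using hf t)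
  simpa only [Fintype.sum_prod_type, mutualInfo] using this

end MutualInfo

section Model

variable {W Z : Type*} [Fintype W] [Fintype Z] {n m : ℕ}

lemma iid_nonneg {pZ : Z → ℝ} (hpZ : ∀ z, 0 ≤ pZ z) (dt : Fin m → Z) : 0 ≤ iid m pZ dt :=
  prod_nonneg fun j _ => hpZ (dt j)

lemma isPMF_iid {pZ : Z → ℝ} (hpZ : IsPMF pZ) : IsPMF (iid m pZ) :=
  ⟨iid_nonneg hpZ.1, by simp [iid, ← Fintype.prod_sum, hpZ.2]⟩

lemma sum_iid_mul_apply {pZ : Z → ℝ} (hpZ : ∑ z, pZ z = 1) (j : Fin m) (f : Z → ℝ) :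
    ∑ dt, iid m pZ dt * f (dt j) = ∑ z, pZ z * f z := by
  have h := Fintype.prod_sum fun (k : Fin m) (z : Z) => pZ z * if k = j then f z else 1
  rw [prod_eq_single j (fun k _ hk => by simp [hk, hpZ]) (by simp)] at h
  simp only [prod_mul_distrib, prod_ite_eq', mem_univ, if_true] at h
  exact h.symm

omit [Fintype W] in
lemma popRisk_iid {pZ : Z → ℝ} (hpZ : ∑ z, pZ z = 1) (ℓ : W → Z → ℝ) (w : W) :
    popRisk ℓ (iid m pZ) w = (∑ _j : Fin m, ∑ z, pZ z * ℓ w z) / m := by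
  simp only [popRisk, empRisk, mul_div_assoc', ← sum_div, mul_sum]
  rw [Finset.sum_comm]
  simp only [sum_iid_mul_apply hpZ]

def jointExpect (pS : (Fin n → Z) → ℝ) (pT : (Fin m → Z) → ℝ)
    (P : (Fin n → Z) → (Fin m → Z) → W → ℝ) (F : (Fin n → Z) → (Fin m → Z) → W → ℝ) : ℝ :=
  ∑ ds, ∑ dt, ∑ w, pS ds * pT dt * P ds dt w * F ds dt w

def jointWZ [DecidableEq Z] (pS : (Fin n → Z) → ℝ) (pT : (Fin m → Z) → ℝ)
    (P : (Fin n → Z) → (Fin m → Z) → W → ℝ) (j : Fin m) (w : W) (z : Z) : ℝ :=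
  ∑ ds, ∑ dt, if dt j = z then pS ds * pT dt * P ds dt w else 0

def condLawW (pT : (Fin m → Z) → ℝ) (P : (Fin n → Z) → (Fin m → Z) → W → ℝ)
    (ds : Fin n → Z) (w : W) : ℝ :=
  ∑ dt, pT dt * P ds dt w

variable {pS : (Fin n → Z) → ℝ} {pT : (Fin m → Z) → ℝ}
  {P : (Fin n → Z) → (Fin m → Z) → W → ℝ}

section JointExpect

variable (pS pT P)

lemma jointExpect_sub (F G : (Fin n → Z) → (Fin m → Z) → W → ℝ) :
    jointExpect pS pT P (fun ds dt w => F ds dt w - G ds dt w) =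
      jointExpect pS pT P F - jointExpect pS pT P G := by
  simp only [jointExpect, mul_sub, sum_sub_distrib]

lemma jointExpect_sum {ι : Type*} (s : Finset ι)
    (F : ι → (Fin n → Z) → (Fin m → Z) → W → ℝ) :
    jointExpect pS pT P (fun ds dt w => ∑ i ∈ s, F i ds dt w) =
      ∑ i ∈ s, jointExpect pS pT P (F i) := by
  simp only [jointExpect, mul_sum, Finset.sum_comm (t := s)]

lemma jointExpect_div (F : (Fin n → Z) → (Fin m → Z) → W → ℝ) (c : ℝ) :
    jointExpect pS pT P (fun ds dt w => F ds dt w / c) = jointExpect pS pT P F / c := by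
  simp only [jointExpect, mul_div_assoc', sum_div]

lemma jointExpect_eq_sum_margW_mul (g : W → ℝ) :
    jointExpect pS pT P (fun _ _ w => g w) = ∑ w, margW pS pT P w * g w := by
  simp only [jointExpect, margW, sum_mul, Finset.sum_comm (t := (univ : Finset W))]

variable [DecidableEq Z]

omit [Fintype W] in
lemma sum_jointWZ_mul (j : Fin m) (w : W) (f : Z → ℝ) :
    ∑ z, jointWZ pS pT P j w z * f z = ∑ ds, ∑ dt, pS ds * pT dt * P ds dt w * f (dt j) := by
  simp only [jointWZ, sum_mul, ite_mul, zero_mul, Finset.sum_comm (s := (univ : Finset Z))]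
  simp

lemma jointExpect_eq_sum_jointWZ_mul (j : Fin m) (f : W → Z → ℝ) :
    jointExpect pS pT P (fun _ dt w => f w (dt j)) =
      ∑ w, ∑ z, jointWZ pS pT P j w z * f w z := by
  simp only [sum_jointWZ_mul, jointExpect, Finset.sum_comm (t := (univ : Finset W))]

lemma sum_jointWZ_eq_margW (j : Fin m) (w : W) :
    ∑ z, jointWZ pS pT P j w z = margW pS pT P w := by
  simpa [margW] using sum_jointWZ_mul pS pT P j w 1

end JointExpect

lemma jointExpect_congr {F G : (Fin n → Z) → (Fin m → Z) → W → ℝ}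
    (h : ∀ ds dt w, pS ds * pT dt * P ds dt w ≠ 0 → F ds dt w = G ds dt w) :
    jointExpect pS pT P F = jointExpect pS pT P G := by
  refine sum_congr rfl fun ds _ => sum_congr rfl fun dt _ => sum_congr rfl fun w _ => ?_
  by_cases ha : pS ds * pT dt * P ds dt w = 0
  · simp [ha]
  · rw [h ds dt w ha]

lemma jointExpect_one (hpS : ∑ ds, pS ds = 1) (hpT : ∑ dt, pT dt = 1)
    (hP : ∀ ds dt, ∑ w, P ds dt w = 1) : jointExpect pS pT P (fun _ _ _ => 1) = 1 := by
  simp [jointExpect, ← mul_sum, hP, hpT, hpS]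

theorem condMI_eq_jointExpect : condMI pS pT P = jointExpect pS pT P
    (fun ds dt w => Real.log (pT dt * P ds dt w / (condLawW pT P ds w * pT dt))) := by
  simp only [condMI, KL, jointExpect, condLawW, Fintype.sum_prod_type, mul_sum,
    Finset.sum_comm (s := (univ : Finset W)), mul_assoc]

variable [DecidableEq Z]

/-- Given `D_s`, draw `W` from its conditional law and then each target sample `Z_j`
independently from its conditional law given `W`. -/
def decoupledLaw (pS : (Fin n → Z) → ℝ) (pT : (Fin m → Z) → ℝ)
    (P : (Fin n → Z) → (Fin m → Z) → W → ℝ) (ds : Fin n → Z) (dt : Fin m → Z) (w : W) : ℝ :=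
  pS ds * condLawW pT P ds w * ∏ j, jointWZ pS pT P j w (dt j) / margW pS pT P w

section Support

variable (hpS : ∀ ds, 0 ≤ pS ds) (hpT : ∀ dt, 0 ≤ pT dt) (hP : ∀ ds dt w, 0 ≤ P ds dt w)
include hpS hpT hP

omit [Fintype W] [Fintype Z] [DecidableEq Z] in
lemma joint_nonneg (ds : Fin n → Z) (dt : Fin m → Z) (w : W) :
    0 ≤ pS ds * pT dt * P ds dt w :=
  mul_nonneg (mul_nonneg (hpS ds) (hpT dt)) (hP ds dt w)

omit [Fintype W] in
lemma jointWZ_nonneg (j : Fin m) (w : W) (z : Z) : 0 ≤ jointWZ pS pT P j w z :=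
  sum_nonneg fun ds _ => sum_nonneg fun dt _ => by
    split_ifs
    exacts [joint_nonneg hpS hpT hP ds dt w, le_rfl]

lemma decoupledLaw_nonneg (ds : Fin n → Z) (dt : Fin m → Z) (w : W) :
    0 ≤ decoupledLaw pS pT P ds dt w :=
  mul_nonneg (mul_nonneg (hpS ds) (sum_nonneg fun dt _ => mul_nonneg (hpT dt) (hP ds dt w)))
    (prod_nonneg fun j _ => div_nonneg (jointWZ_nonneg hpS hpT hP j w (dt j))
      (sum_nonneg fun _ _ => sum_nonneg fun _ _ => joint_nonneg hpS hpT hP _ _ w))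

variable {ds : Fin n → Z} {dt : Fin m → Z} {w : W} (ha : 0 < pS ds * pT dt * P ds dt w)
include ha

omit [Fintype W] [DecidableEq Z] in
lemma condLawW_pos : 0 < condLawW pT P ds w :=
  (pos_of_mul_pos_right (by rwa [mul_assoc] at ha) (hpS ds)).trans_le
    (single_le_sum (f := fun dt => pT dt * P ds dt w)
      (fun dt _ => mul_nonneg (hpT dt) (hP ds dt w)) (mem_univ dt))

omit [DecidableEq Z] in
lemma margW_pos : 0 < margW pS pT P w :=
  ha.trans_le (le_sum_sum (joint_nonneg hpS hpT hP · · w) ds dt)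

omit [Fintype W] in
lemma jointWZ_pos (j : Fin m) : 0 < jointWZ pS pT P j w (dt j) :=
  ha.trans_le <| by
    simpa [jointWZ] using le_sum_sum (f := fun ds' dt' =>
      if dt' j = dt j then pS ds' * pT dt' * P ds' dt' w else 0)
      (fun ds' dt' => by split_ifs; exacts [joint_nonneg hpS hpT hP ds' dt' w, le_rfl]) ds dt

lemma decoupledLaw_pos : 0 < decoupledLaw pS pT P ds dt w :=
  mul_pos (mul_pos (pos_of_mul_pos_left (by rwa [mul_assoc] at ha)
      (mul_nonneg (hpT dt) (hP ds dt w))) (condLawW_pos hpS hpT hP ha))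
    (prod_pos fun j _ => div_pos (jointWZ_pos hpS hpT hP ha j) (margW_pos hpS hpT hP ha))

end Support

lemma isPMF_jointWZ (hpS : IsPMF pS) (hpT : IsPMF pT) (hP : ∀ ds dt, IsPMF (P ds dt))
    (j : Fin m) : IsPMF (Function.uncurry (jointWZ pS pT P j)) := by
  refine ⟨fun x => jointWZ_nonneg hpS.1 hpT.1 (fun ds dt => (hP ds dt).1) j x.1 x.2, ?_⟩
  simp only [Function.uncurry, Fintype.sum_prod_type]
  simpa [sum_jointWZ_eq_margW, jointExpect_eq_sum_margW_mul] using
    jointExpect_one hpS.2 hpT.2 fun ds dt => (hP ds dt).2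

lemma sum_jointWZ_iid_eq_pZ {pZ : Z → ℝ} (hpS : ∑ ds, pS ds = 1) (hpZ : ∑ z, pZ z = 1)
    (hP : ∀ ds dt, ∑ w, P ds dt w = 1) (j : Fin m) (z : Z) :
    ∑ w, jointWZ pS (iid m pZ) P j w z = pZ z := by
  have h := jointExpect_eq_sum_jointWZ_mul pS (iid m pZ) P j fun _ z' => if z' = z then 1 else 0
  simp only [mul_ite, mul_one, mul_zero, sum_ite_eq', mem_univ, if_true] at h
  have hT : ∑ dt, iid m pZ dt * (if dt j = z then 1 else 0) = pZ z := by
    simpa using sum_iid_mul_apply hpZ j fun z' => if z' = z then (1 : ℝ) else 0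
  rw [← h]
  calc _ = ∑ ds, pS ds * ∑ dt, iid m pZ dt * (if dt j = z then 1 else 0) := by
        simp only [jointExpect, mul_sum]
        refine sum_congr rfl fun ds _ => sum_congr rfl fun dt _ => ?_
        rw [← sum_mul, ← mul_sum, hP ds dt]
        ring
    _ = pZ z := by rw [hT, ← sum_mul, hpS, one_mul]

theorem gen_iid_eq {pZ : Z → ℝ} (hpZ : ∑ z, pZ z = 1) (ℓ : W → Z → ℝ) :
    gen ℓ pS (iid m pZ) P = (∑ j, (∑ w, ∑ z, margW pS (iid m pZ) P w * pZ z * ℓ w z -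
      ∑ w, ∑ z, jointWZ pS (iid m pZ) P j w z * ℓ w z)) / m := by
  have h : gen ℓ pS (iid m pZ) P = jointExpect pS (iid m pZ) P
      (fun _ dt w => (∑ j, (∑ z, pZ z * ℓ w z - ℓ w (dt j))) / m) := by
    simp only [gen, jointExpect, popRisk_iid hpZ, empRisk, sum_sub_distrib, sub_div]
  rw [h, jointExpect_div, jointExpect_sum]
  congr 1
  refine sum_congr rfl fun j _ => ?_
  rw [jointExpect_sub, jointExpect_eq_sum_margW_mul, jointExpect_eq_sum_jointWZ_mul]
  simp only [mul_sum, mul_assoc]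

theorem abs_sub_le_sqrt_mutualInfo_jointWZ {pZ : Z → ℝ} (hpS : IsPMF pS) (hpZ : IsPMF pZ)
    (hP : ∀ ds dt, IsPMF (P ds dt)) {ℓ : W → Z → ℝ} {σ : ℝ}
    (hsub : SubGaussianLoss ℓ (margW pS (iid m pZ) P) pZ σ) (j : Fin m) :
    |∑ w, ∑ z, margW pS (iid m pZ) P w * pZ z * ℓ w z -
      ∑ w, ∑ z, jointWZ pS (iid m pZ) P j w z * ℓ w z| ≤
      √(2 * σ ^ 2 * mutualInfo (jointWZ pS (iid m pZ) P j)) := by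
  have hW := sum_jointWZ_eq_margW pS (iid m pZ) P j
  have hZ := sum_jointWZ_iid_eq_pZ hpS.2 hpZ.2 (fun ds dt => (hP ds dt).2) j
  have h := sq_sub_le_two_mul_mutualInfo (isPMF_jointWZ hpS (isPMF_iid hpZ) hP j) ℓ
    (σ := σ) (by simpa only [hW, hZ] using hsub)
  simp only [hW, hZ] at h
  rw [abs_sub_comm]
  exact Real.abs_le_sqrt h

theorem mutualInfo_jointWZ_iid {pZ : Z → ℝ} (hpS : ∑ ds, pS ds = 1) (hpZ : ∑ z, pZ z = 1)
    (hP : ∀ ds dt, ∑ w, P ds dt w = 1) (j : Fin m) :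
    mutualInfo (jointWZ pS (iid m pZ) P j) = jointExpect pS (iid m pZ) P (fun _ dt w =>
      Real.log (jointWZ pS (iid m pZ) P j w (dt j) / (margW pS (iid m pZ) P w * pZ (dt j)))) := by
  simp only [mutualInfo, KL, Fintype.sum_prod_type, sum_jointWZ_eq_margW,
    sum_jointWZ_iid_eq_pZ hpS hpZ hP]
  exact (jointExpect_eq_sum_jointWZ_mul pS (iid m pZ) P j fun w z =>
    Real.log (jointWZ pS (iid m pZ) P j w z / (margW pS (iid m pZ) P w * pZ z))).symm

lemma sum_decoupledLaw_le_one (hpS : IsPMF pS) (hpT : IsPMF pT)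
    (hP : ∀ ds dt, IsPMF (P ds dt)) : ∑ ds, ∑ dt, ∑ w, decoupledLaw pS pT P ds dt w ≤ 1 := by
  have hP0 : ∀ ds dt w, 0 ≤ P ds dt w := fun ds dt => (hP ds dt).1
  have hC : ∀ ds w, 0 ≤ condLawW pT P ds w := fun ds w =>
    sum_nonneg fun dt _ => mul_nonneg (hpT.1 dt) (hP0 ds dt w)
  -- the conditional laws of the `Z_j` given `W = w` have mass `1`, or `0` when `P(W = w) = 0`
  have hcond : ∀ w, ∑ dt : Fin m → Z, ∏ j, jointWZ pS pT P j w (dt j) / margW pS pT P w ≤ 1 := by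
    intro w
    rw [← Fintype.prod_sum (fun j z => jointWZ pS pT P j w z / margW pS pT P w)]
    simp only [← sum_div, sum_jointWZ_eq_margW]
    have hMM : 0 ≤ margW pS pT P w / margW pS pT P w := by
      rcases eq_or_ne (margW pS pT P w) 0 with h | h <;> simp [h]
    exact prod_le_one (fun _ _ => hMM) fun _ _ => div_self_le_one _
  calc ∑ ds, ∑ dt, ∑ w, decoupledLaw pS pT P ds dt w
      = ∑ ds, pS ds * ∑ w, condLawW pT P ds w *
          ∑ dt : Fin m → Z, ∏ j, jointWZ pS pT P j w (dt j) / margW pS pT P w := by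
        simp only [decoupledLaw, mul_sum, mul_assoc, Finset.sum_comm (t := (univ : Finset W))]
    _ ≤ ∑ ds, pS ds * ∑ w, condLawW pT P ds w * 1 := by
        gcongr with ds _ w _
        exacts [hpS.1 ds, hC ds w, hcond w]
    _ = 1 := by
        simp only [condLawW, mul_one, Finset.sum_comm (s := (univ : Finset W)), ← mul_sum,
          (hP _ _).2, hpT.2, hpS.2]

lemma log_div_decoupledLaw {pZ : Z → ℝ} (hpS : ∀ ds, 0 ≤ pS ds) (hpZ : ∀ z, 0 ≤ pZ z)
    (hP : ∀ ds dt w, 0 ≤ P ds dt w) {ds : Fin n → Z} {dt : Fin m → Z} {w : W}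
    (ha : 0 < pS ds * iid m pZ dt * P ds dt w) :
    Real.log (pS ds * iid m pZ dt * P ds dt w / decoupledLaw pS (iid m pZ) P ds dt w) =
      Real.log (iid m pZ dt * P ds dt w / (condLawW (iid m pZ) P ds w * iid m pZ dt)) -
        ∑ j, Real.log (jointWZ pS (iid m pZ) P j w (dt j) /
          (margW pS (iid m pZ) P w * pZ (dt j))) := by
  have hT0 := iid_nonneg hpZ (m := m)
  have hC := condLawW_pos hpS hT0 hP ha
  have hM := margW_pos hpS hT0 hP ha
  have hJ := jointWZ_pos hpS hT0 hP ha
  rw [mul_assoc] at ha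
  have hS : 0 < pS ds := pos_of_mul_pos_left ha (mul_nonneg (hT0 dt) (hP ds dt w))
  have hTP : 0 < iid m pZ dt * P ds dt w := pos_of_mul_pos_right ha hS.le
  have hT : 0 < iid m pZ dt := pos_of_mul_pos_left hTP (hP ds dt w)
  have ht : ∀ j, pZ (dt j) ≠ 0 := fun j => prod_ne_zero_iff.mp hT.ne' j (mem_univ j)
  have hprod : ∏ j, jointWZ pS (iid m pZ) P j w (dt j) / (margW pS (iid m pZ) P w * pZ (dt j)) =
      (∏ j, jointWZ pS (iid m pZ) P j w (dt j) / margW pS (iid m pZ) P w) / iid m pZ dt := by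
    simp only [iid, ← prod_div_distrib, div_div]
  have hprod0 : ∏ j, jointWZ pS (iid m pZ) P j w (dt j) / margW pS (iid m pZ) P w ≠ 0 :=
    prod_ne_zero_iff.mpr fun j _ => (div_pos (hJ j) hM).ne'
  rw [← Real.log_prod fun j _ => (div_pos (hJ j) (mul_pos hM ((hpZ _).lt_of_ne' (ht j)))).ne',
    ← Real.log_div (div_pos hTP (mul_pos hC hT)).ne' (hprod ▸ div_ne_zero hprod0 hT.ne'),
    hprod, decoupledLaw]
  congr 1
  field_simp

theorem sum_mutualInfo_jointWZ_le_condMI {pZ : Z → ℝ} (hpS : IsPMF pS) (hpZ : IsPMF pZ)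
    (hP : ∀ ds dt, IsPMF (P ds dt)) :
    ∑ j, mutualInfo (jointWZ pS (iid m pZ) P j) ≤ condMI pS (iid m pZ) P := by
  have hT := isPMF_iid hpZ (m := m)
  have hP0 : ∀ ds dt w, 0 ≤ P ds dt w := fun ds dt => (hP ds dt).1
  have hP1 : ∀ ds dt, ∑ w, P ds dt w = 1 := fun ds dt => (hP ds dt).2
  have ha := joint_nonneg hpS.1 hT.1 hP0
  have hb := decoupledLaw_nonneg hpS.1 hT.1 hP0
  have hgap : condMI pS (iid m pZ) P - ∑ j, mutualInfo (jointWZ pS (iid m pZ) P j) =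
      jointExpect pS (iid m pZ) P (fun ds dt w => Real.log
        (pS ds * iid m pZ dt * P ds dt w / decoupledLaw pS (iid m pZ) P ds dt w)) := by
    simp only [condMI_eq_jointExpect, mutualInfo_jointWZ_iid hpS.2 hpZ.2 hP1, ← jointExpect_sum,
      ← jointExpect_sub]
    exact jointExpect_congr fun ds dt w h =>
      (log_div_decoupledLaw hpS.1 hpZ.1 hP0 ((ha ds dt w).lt_of_ne' h)).symm
  have hgibbs : ∑ ds, ∑ dt, ∑ w, (pS ds * iid m pZ dt * P ds dt w -
      decoupledLaw pS (iid m pZ) P ds dt w) ≤ jointExpect pS (iid m pZ) P (fun ds dt w =>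
        Real.log (pS ds * iid m pZ dt * P ds dt w / decoupledLaw pS (iid m pZ) P ds dt w)) :=
    sum_le_sum fun ds _ => sum_le_sum fun dt _ => sum_le_sum fun w _ =>
      sub_le_mul_log_div (ha ds dt w) (hb ds dt w) fun h => by
        by_contra h'
        exact (decoupledLaw_pos hpS.1 hT.1 hP0 ((ha ds dt w).lt_of_ne' h')).ne' h
  have hmass : ∑ ds, ∑ dt, ∑ w, pS ds * iid m pZ dt * P ds dt w = 1 := by
    simpa [jointExpect] using jointExpect_one hpS.2 hT.2 hP1
  simp only [sum_sub_distrib, hmass] at hgibbs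
  linarith [sum_decoupledLaw_le_one hpS hT hP]

end Model

theorem gen_upper_bound_subGaussian_general
    {W Z : Type*} [Fintype W] [Fintype Z] {n m : ℕ}
    (ℓ : W → Z → ℝ)
    (pS : (Fin n → Z) → ℝ) (hpS : IsPMF pS)
    (pZ : Z → ℝ) (hpZ : IsPMF pZ)
    (P : (Fin n → Z) → (Fin m → Z) → W → ℝ) (hP : ∀ ds dt, IsPMF (P ds dt))
    (σ : ℝ)
    (hsub : SubGaussianLoss ℓ (margW pS (iid m pZ) P) pZ σ) :
    |gen ℓ pS (iid m pZ) P| ≤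
      Real.sqrt (2 * σ ^ 2 / m * condMI pS (iid m pZ) P) := by
  classical
  set I := fun j => mutualInfo (jointWZ pS (iid m pZ) P j)
  have hI : ∀ j, 0 ≤ 2 * σ ^ 2 * I j := fun j =>
    mul_nonneg (by positivity) (mutualInfo_nonneg (isPMF_jointWZ hpS (isPMF_iid hpZ) hP j))
  calc |gen ℓ pS (iid m pZ) P|
      ≤ (∑ j, √(2 * σ ^ 2 * I j)) / m := by
        rw [gen_iid_eq hpZ.2, abs_div, Nat.abs_cast]
        gcongr
        exact (abs_sum_le_sum_abs _ _).trans
          (sum_le_sum fun j _ => abs_sub_le_sqrt_mutualInfo_jointWZ hpS hpZ hP hsub j)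
    _ ≤ √((∑ j, 2 * σ ^ 2 * I j) / m) := by
        simpa using sum_sqrt_div_card_le_sqrt univ fun j _ => hI j
    _ ≤ √(2 * σ ^ 2 / m * condMI pS (iid m pZ) P) := by
        rw [← mul_sum, mul_div_right_comm]
        gcongr
        exact sum_mutualInfo_jointWZ_le_condMI hpS hpZ hP

theorem gen_upper_bound_subGaussian
    {W Z : Type*} [Fintype W] [Fintype Z] {n m : ℕ} (hm : 0 < m)
    (ℓ : W → Z → ℝ) (hℓ : ∀ w z, 0 ≤ ℓ w z)
    (pS : (Fin n → Z) → ℝ) (hpS : IsPMF pS)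
    (pZ : Z → ℝ) (hpZ : IsPMF pZ)
    (P : (Fin n → Z) → (Fin m → Z) → W → ℝ) (hP : ∀ ds dt, IsPMF (P ds dt))
    (σ : ℝ)
    (hsub : SubGaussianLoss ℓ (margW pS (iid m pZ) P) pZ σ) :
    |gen ℓ pS (iid m pZ) P| ≤
      Real.sqrt (2 * σ ^ 2 / m * condMI pS (iid m pZ) P) :=
  gen_upper_bound_subGaussian_general ℓ pS hpS pZ hpZ P hP σ hsub

end TransferGibbs
end
end

section
/- The expected transfer generalization error of the α-weighted Gibbs algorithm equals gen_α(P_{D_s},P_{D_t}) = D_SKL( P^γ_{W_α|D_s,D_t} ‖ P^{γ,L_α}_{W_α|D_s} | P_{D_s} P_{D_t} ) / (γα), where P^{γ,L_α}_{W_α|D_s} is the (γ, π(w_α), L_α(w_α,d_s,P_{D_t}))-Gibbs algorithm with energy L_α(w_α,d_s,P_{D_t}) = α L_P(w_α,P_{D_t}) + (1−α) L_E(w_α,d_s), and D_SKL(·‖·|·) denotes the conditional symmetrized KL divergence averaged over P_{D_s} ⊗ P_{D_t}. -/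
/-!
For Gibbs posteriors with the same prior and inverse temperature, the log-likelihood ratio
`log (P/Q)` is `γ (g - f)` up to a normalising constant, so `SKL(P, Q) = γ ∑ (P - Q)(g - f)`.
Comparing the `α`-weighted Gibbs algorithm with the Gibbs algorithm for the mixed risk `L_α`,
the energy difference is `α (L_P - L_E(·, d_t))`. The reference algorithm ignores `d_t`, so its
transfer generalization error vanishes, and averaging over the data leaves `γ α · gen_α`.
-/

open scoped BigOperators
open Finset

noncomputable section

namespace TransferGibbs

def SKL {α : Type*} [Fintype α] (p q : α → ℝ) : ℝ := KL p q + KL q p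

def gibbs {W : Type*} [Fintype W] (π : W → ℝ) (γ : ℝ) (f : W → ℝ) (w : W) : ℝ :=
  π w * Real.exp (-γ * f w) / ∑ w', π w' * Real.exp (-γ * f w')

def wEmpRisk {W Z : Type*} [Fintype Z] (ℓ : W → Z → ℝ) (α : ℝ) {n m : ℕ}
    (ds : Fin n → Z) (dt : Fin m → Z) (w : W) : ℝ :=
  (1 - α) * empRisk ℓ ds w + α * empRisk ℓ dt w

/-- The mixed risk `L_α(w, d_s, P_{D_t}) = α L_P(w,P_{D_t}) + (1−α) L_E(w,d_s)`. -/
def mixRisk {W Z : Type*} [Fintype Z] (ℓ : W → Z → ℝ) (α : ℝ) {n m : ℕ}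
    (ds : Fin n → Z) (pT : (Fin m → Z) → ℝ) (w : W) : ℝ :=
  α * popRisk ℓ pT w + (1 - α) * empRisk ℓ ds w

/-- Conditional symmetrized KL divergence between two algorithms, averaged over
`P_{D_s} ⊗ P_{D_t}`. -/
def condSKLdiv {W Z : Type*} [Fintype W] [Fintype Z] {n m : ℕ}
    (pS : (Fin n → Z) → ℝ) (pT : (Fin m → Z) → ℝ)
    (P P' : (Fin n → Z) → (Fin m → Z) → W → ℝ) : ℝ :=
  ∑ ds, ∑ dt, pS ds * pT dt * SKL (P ds dt) (P' ds dt)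


lemma SKL_eq_sum_sub_mul_log {α : Type*} [Fintype α] (p q : α → ℝ) :
    SKL p q = ∑ x, (p x - q x) * Real.log (p x / q x) := by
  unfold SKL KL
  rw [← sum_add_distrib]
  refine sum_congr rfl fun x _ => ?_
  rw [← inv_div (p x) (q x), Real.log_inv]
  ring

section Gibbs

variable {W : Type*} [Fintype W] [Nonempty W] {π : W → ℝ} (hπ : ∀ w, 0 < π w) (γ : ℝ)
include hπ

lemma gibbs_partition_pos (f : W → ℝ) : 0 < ∑ w, π w * Real.exp (-γ * f w) :=
  sum_pos (fun w _ => mul_pos (hπ w) (Real.exp_pos _)) univ_nonempty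

lemma sum_gibbs (f : W → ℝ) : ∑ w, gibbs π γ f w = 1 := by
  unfold gibbs
  rw [← sum_div, div_self (gibbs_partition_pos hπ γ f).ne']

lemma log_gibbs_div_gibbs (f g : W → ℝ) (w : W) :
    Real.log (gibbs π γ f w / gibbs π γ g w) =
      γ * (g w - f w) + Real.log ((∑ w', π w' * Real.exp (-γ * g w')) /
        ∑ w', π w' * Real.exp (-γ * f w')) := by
  have hZf := (gibbs_partition_pos hπ γ f).ne'
  have hZg := (gibbs_partition_pos hπ γ g).ne'
  have hπw := (hπ w).ne'
  have hratio : gibbs π γ f w / gibbs π γ g w = Real.exp (γ * (g w - f w)) *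
      ((∑ w', π w' * Real.exp (-γ * g w')) / ∑ w', π w' * Real.exp (-γ * f w')) := by
    have hexp : Real.exp (γ * (g w - f w)) * Real.exp (-γ * g w) = Real.exp (-γ * f w) := by
      rw [← Real.exp_add]; ring_nf
    rw [gibbs, gibbs, ← hexp]
    field_simp
  rw [hratio, Real.log_mul (Real.exp_pos _).ne' (div_ne_zero hZg hZf), Real.log_exp]

lemma SKL_gibbs_gibbs (f g : W → ℝ) :
    SKL (gibbs π γ f) (gibbs π γ g) = γ * ∑ w, (gibbs π γ f w - gibbs π γ g w) * (g w - f w) := by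
  simp_rw [SKL_eq_sum_sub_mul_log, log_gibbs_div_gibbs hπ, mul_add, sum_add_distrib, ← sum_mul,
    sum_sub_distrib, sum_gibbs hπ, sub_self, zero_mul, add_zero, mul_sum]
  refine sum_congr rfl fun w _ => ?_
  ring

end Gibbs

section Transfer

variable {W Z : Type*} [Fintype Z] {n m : ℕ} (ℓ : W → Z → ℝ) (pT : (Fin m → Z) → ℝ)

lemma mixRisk_sub_wEmpRisk (α : ℝ) (ds : Fin n → Z) (dt : Fin m → Z) (w : W) :
    mixRisk ℓ α ds pT w - wEmpRisk ℓ α ds dt w = α * (popRisk ℓ pT w - empRisk ℓ dt w) := by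
  simp only [mixRisk, wEmpRisk]
  ring

lemma sum_mul_popRisk_sub_empRisk (hpT : ∑ dt, pT dt = 1) (w : W) :
    ∑ dt, pT dt * (popRisk ℓ pT w - empRisk ℓ dt w) = 0 := by
  simp_rw [mul_sub, sum_sub_distrib, ← sum_mul, hpT, one_mul, popRisk, sub_self]

variable [Fintype W]

lemma SKL_gibbs_wEmpRisk_gibbs_mixRisk [Nonempty W] {π : W → ℝ} (hπ : ∀ w, 0 < π w) (α γ : ℝ)
    (ds : Fin n → Z) (dt : Fin m → Z) :
    SKL (gibbs π γ (wEmpRisk ℓ α ds dt)) (gibbs π γ (mixRisk ℓ α ds pT)) =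
      γ * α * ∑ w, (gibbs π γ (wEmpRisk ℓ α ds dt) w - gibbs π γ (mixRisk ℓ α ds pT) w) *
        (popRisk ℓ pT w - empRisk ℓ dt w) := by
  simp_rw [SKL_gibbs_gibbs hπ, mixRisk_sub_wEmpRisk, mul_assoc, mul_sum]
  refine sum_congr rfl fun w _ => ?_
  ring

variable (pS : (Fin n → Z) → ℝ)

lemma gen_sub_gen (P P' : (Fin n → Z) → (Fin m → Z) → W → ℝ) :
    gen ℓ pS pT P - gen ℓ pS pT P' = ∑ ds, ∑ dt, pS ds * pT dt *
      ∑ w, (P ds dt w - P' ds dt w) * (popRisk ℓ pT w - empRisk ℓ dt w) := by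
  simp_rw [gen, ← sum_sub_distrib, mul_sum]
  refine sum_congr rfl fun ds _ => sum_congr rfl fun dt _ => sum_congr rfl fun w _ => ?_
  ring

lemma gen_eq_zero_of_indep_target (hpT : ∑ dt, pT dt = 1) (Q : (Fin n → Z) → W → ℝ) :
    gen ℓ pS pT (fun ds _ => Q ds) = 0 := by
  refine sum_eq_zero fun ds _ => ?_
  rw [sum_comm]
  refine sum_eq_zero fun w _ => ?_
  calc ∑ dt, pS ds * pT dt * Q ds w * (popRisk ℓ pT w - empRisk ℓ dt w)
      = pS ds * Q ds w * ∑ dt, pT dt * (popRisk ℓ pT w - empRisk ℓ dt w) := by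
        rw [mul_sum]
        exact sum_congr rfl fun dt _ => by ring
    _ = 0 := by rw [sum_mul_popRisk_sub_empRisk ℓ pT hpT, mul_zero]

end Transfer

theorem alpha_weighted_gibbs_gen_eq_skl_divergence_general
    {W Z : Type*} [Fintype W] [Fintype Z] {n m : ℕ}
    (ℓ : W → Z → ℝ)
    (pS : (Fin n → Z) → ℝ)
    (pT : (Fin m → Z) → ℝ) (hpT : IsPMF pT)
    (π : W → ℝ) (hπpos : ∀ w, 0 < π w)
    (α γ : ℝ) (hα0 : 0 < α) (hγ : 0 < γ) :
    gen ℓ pS pT (fun ds dt => gibbs π γ (wEmpRisk ℓ α ds dt)) =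
      condSKLdiv pS pT (fun ds dt => gibbs π γ (wEmpRisk ℓ α ds dt))
        (fun ds _dt => gibbs π γ (mixRisk ℓ α ds pT)) / (γ * α) := by
  rw [eq_div_iff (mul_pos hγ hα0).ne']
  rcases isEmpty_or_nonempty W with hW | hW
  · simp [gen, condSKLdiv, SKL, KL]
  rw [← sub_zero (gen ℓ pS pT _), ← gen_eq_zero_of_indep_target ℓ pT pS hpT.2
    (fun ds => gibbs π γ (mixRisk ℓ α ds pT)), gen_sub_gen]
  simp only [condSKLdiv, SKL_gibbs_wEmpRisk_gibbs_mixRisk ℓ pT hπpos, sum_mul]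
  refine sum_congr rfl fun ds _ => sum_congr rfl fun dt _ => ?_
  ring

theorem alpha_weighted_gibbs_gen_eq_skl_divergence
    {W Z : Type*} [Fintype W] [Fintype Z] {n m : ℕ}
    (ℓ : W → Z → ℝ) (hℓ : ∀ w z, 0 ≤ ℓ w z)
    (pS : (Fin n → Z) → ℝ) (hpS : IsPMF pS)
    (pT : (Fin m → Z) → ℝ) (hpT : IsPMF pT)
    (π : W → ℝ) (hπpos : ∀ w, 0 < π w) (hπ : IsPMF π)
    (α γ : ℝ) (hα0 : 0 < α) (hα1 : α < 1) (hγ : 0 < γ) :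
    gen ℓ pS pT (fun ds dt => gibbs π γ (wEmpRisk ℓ α ds dt)) =
      condSKLdiv pS pT (fun ds dt => gibbs π γ (wEmpRisk ℓ α ds dt))
        (fun ds _dt => gibbs π γ (mixRisk ℓ α ds pT)) / (γ * α) :=
  alpha_weighted_gibbs_gen_eq_skl_divergence_general ℓ pS pT hpT π hπpos α γ hα0 hγ

end TransferGibbs
end
end
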